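/- In the tree A_X associated to a complete ultrametric space (X,d) with distance δ, for any three points S, S_0, S_1 one has δ(S ∨ S_0, S ∨ S_1) ≤ δ(S_0, S_1), where S ∨ S' = [x, max{r, r', d(x,x')}] for S = [x,r], S' = [x',r']. -/
import Mathlib


/-- `δ((x,r),(x',r')) = max {r, r', d(x,x')} − (r + r')/2` on representatives. -/
noncomputable def preDelta {X : Type*} [MetricSpace X] (p q : X × ℝ) : ℝ :=
  max (max p.2 q.2) (dist p.1 q.1) - (p.2 + q.2) / 2

/-- The join `S ∨ S' = [x, max {r, r', d(x,x')}]` on representatives. -/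
noncomputable def preJoin {X : Type*} [MetricSpace X] (p q : X × ℝ) : X × ℝ :=
  (p.1, max (max p.2 q.2) (dist p.1 q.1))

/-- In the tree `A_X` associated to a complete ultrametric space `(X, d)` with distance
`δ`, for any three points `S, S₀, S₁` one has `δ(S ∨ S₀, S ∨ S₁) ≤ δ(S₀, S₁)`
(stated on representatives `[x, r]` with `r ∈ I = [0, diam X]`). -/
theorem stmt12 {X : Type*} [MetricSpace X] [CompleteSpace X] [IsUltrametricDist X]
    (p p₀ p₁ : X × ℝ)
    (hp : 0 ≤ p.2 ∧ ENNReal.ofReal p.2 ≤ EMetric.diam (Set.univ : Set X))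
    (hp₀ : 0 ≤ p₀.2 ∧ ENNReal.ofReal p₀.2 ≤ EMetric.diam (Set.univ : Set X))
    (hp₁ : 0 ≤ p₁.2 ∧ ENNReal.ofReal p₁.2 ≤ EMetric.diam (Set.univ : Set X)) :
    preDelta (preJoin p p₀) (preJoin p p₁) ≤ preDelta p₀ p₁ := by
  obtain ⟨hr, -⟩ := hp
  obtain ⟨hr0, -⟩ := hp₀
  obtain ⟨hr1, -⟩ := hp₁
  simp only [preDelta, preJoin, dist_self]
  set a := dist p.1 p₀.1 with hadef
  set b := dist p.1 p₁.1 with hbdef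
  set c := dist p₀.1 p₁.1 with hcdef
  set r := p.2
  set r₀ := p₀.2
  set r₁ := p₁.2
  set M₀ := max (max r r₀) a with hM0def
  set M₁ := max (max r r₁) b with hM1def
  set K := max (max r₀ r₁) c with hKdef
  have hrM0 : r ≤ M₀ := le_trans (le_max_left _ _) (le_max_left _ _)
  have hrM1 : r ≤ M₁ := le_trans (le_max_left _ _) (le_max_left _ _)
  have hr0M0 : r₀ ≤ M₀ := le_trans (le_max_right _ _) (le_max_left _ _)
  have hr1M1 : r₁ ≤ M₁ := le_trans (le_max_right _ _) (le_max_left _ _)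
  have haM0 : a ≤ M₀ := le_max_right _ _
  have hbM1 : b ≤ M₁ := le_max_right _ _
  have hr0K : r₀ ≤ K := le_trans (le_max_left _ _) (le_max_left _ _)
  have hr1K : r₁ ≤ K := le_trans (le_max_right _ _) (le_max_left _ _)
  have hcK : c ≤ K := le_max_right _ _
  have ha : a ≤ max b c := by
    rw [hadef, hbdef, hcdef, dist_comm p₀.1 p₁.1]
    exact IsUltrametricDist.dist_triangle_max p.1 p₁.1 p₀.1
  have hb : b ≤ max a c := by
    rw [hadef, hbdef, hcdef]
    exact IsUltrametricDist.dist_triangle_max p.1 p₀.1 p₁.1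
  have hM0 : M₀ ≤ max M₁ K :=
    max_le (max_le (le_trans hrM1 (le_max_left _ _)) (le_trans hr0K (le_max_right _ _)))
      (le_trans ha (max_le (le_trans hbM1 (le_max_left _ _))
        (le_trans hcK (le_max_right _ _))))
  have hM1 : M₁ ≤ max M₀ K :=
    max_le (max_le (le_trans hrM0 (le_max_left _ _)) (le_trans hr1K (le_max_right _ _)))
      (le_trans hb (max_le (le_trans haM0 (le_max_left _ _))
        (le_trans hcK (le_max_right _ _))))
  have hM0nn : (0:ℝ) ≤ M₀ := le_trans hr hrM0
  have houter : max (max M₀ M₁) 0 = max M₀ M₁ :=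
    max_eq_left (le_trans hM0nn (le_max_left _ _))
  rw [houter]
  rcases le_total M₀ M₁ with h | h
  · rw [max_eq_right h]
    rcases le_max_iff.mp hM1 with h' | h' <;> linarith
  · rw [max_eq_left h]
    rcases le_max_iff.mp hM0 with h' | h' <;> linarith
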